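/- arXiv:2211.17129 — 5 statements merged into one kernel-verified Lean document; each statement's English description precedes it below -/
import Mathlib

section
/- Fix integers m ≥ 2 and d ≥ 3, and let λ = (λ_0, …, λ_{d−1}) be a nonzero fundamental parallelepiped point of P_{m,d}. If λ_2 = b/m^k with 1 ≤ k ≤ d−2, 0 < b < m^k, and m ∤ b, then the height of λ satisfies Σ_{j=0}^{d−1} λ_j ≥ ⌊k/2⌋·(1/m). -/
open scoped BigOperators Pointwise

/-- `lam` is a fundamental parallelepiped point for the simplex with vertices `v`:
`0 ≤ lam i < 1` for all `i` and `∑ i, lam i • (1, v i) ∈ ℤ^{n+1}`. -/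
def IsFPP {N n : ℕ} (v : Fin N → Fin n → ℝ) (lam : Fin N → ℝ) : Prop :=
  (∀ i, 0 ≤ lam i ∧ lam i < 1) ∧
  (∃ z : ℤ, ∑ i, lam i = (z : ℝ)) ∧
  (∀ j, ∃ z : ℤ, ∑ i, lam i * v i j = (z : ℝ))

/-- Vertices of the simplex `P_{m,d} ⊆ ℝ^{d-1}`: `u_0 = 0`, `u_1 = e_1`,
`u_j = e_{j-1} + m e_j` for `2 ≤ j ≤ d-1` (coordinates are 0-indexed). -/
def Pvert (m d : ℕ) : Fin d → Fin (d - 1) → ℝ := fun j i =>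
  if (j : ℕ) = 0 then 0
  else if (j : ℕ) = 1 then (if (i : ℕ) = 0 then 1 else 0)
  else if (i : ℕ) = (j : ℕ) - 2 then 1
  else if (i : ℕ) = (j : ℕ) - 1 then (m : ℝ)
  else 0

lemma Pvert_mk (m d : ℕ) (j : ℕ) (hj : j < d) (i : ℕ) (hi : i < d - 1) :
    Pvert m d ⟨j, hj⟩ ⟨i, hi⟩ =
      if j = 0 then 0
      else if j = 1 then (if i = 0 then 1 else 0)
      else if i = j - 2 then 1
      else if i = j - 1 then (m : ℝ)
      else 0 := rfl

theorem stmt9 (m d : ℕ) (hm : 2 ≤ m) (hd : 3 ≤ d) (lam : Fin d → ℝ)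
    (hlam : IsFPP (Pvert m d) lam) (hne : lam ≠ 0) (k b : ℕ)
    (hk1 : 1 ≤ k) (hk2 : k ≤ d - 2) (hb1 : 0 < b) (hb2 : b < m ^ k) (hbm : ¬ (m ∣ b))
    (h2 : lam ⟨2, by omega⟩ = (b : ℝ) / (m : ℝ) ^ k) :
    ((k / 2 : ℕ) : ℝ) * (1 / (m : ℝ)) ≤ ∑ j, lam j := by
  obtain ⟨hrange, -, hcoord⟩ := hlam
  have hm0 : (0:ℝ) < m := by positivity
  set L : ℕ → ℝ := fun j => if h : j < d then lam ⟨j, h⟩ else 0 with hLdef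
  have hLnonneg : ∀ j, 0 ≤ L j := by
    intro j
    by_cases h : j < d
    · simpa [hLdef, h] using (hrange ⟨j, h⟩).1
    · simp [hLdef, h]
  -- the key integrality relations
  have hrel : ∀ j : ℕ, 2 ≤ j → j ≤ d - 2 →
      ∃ z : ℤ, (m : ℝ) * L j + L (j+1) = (z : ℝ) := by
    intro j hj2 hjd
    have hjdd : j < d := by omega
    have hjd' : j + 1 < d := by omega
    have hid : j - 1 < d - 1 := by omega
    obtain ⟨z, hz⟩ := hcoord ⟨j - 1, hid⟩
    refine ⟨z, ?_⟩
    rw [← hz]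
    have key : ∀ x : Fin d, x ∈ Finset.univ →
        x ∉ ({⟨j, hjdd⟩, ⟨j+1, hjd'⟩} : Finset (Fin d)) →
        lam x * Pvert m d x ⟨j - 1, hid⟩ = 0 := by
      intro x _ hx
      obtain ⟨xv, hxd⟩ := x
      simp only [Finset.mem_insert, Finset.mem_singleton, Fin.mk.injEq] at hx
      push_neg at hx
      obtain ⟨hx1, hx2⟩ := hx
      rw [Pvert_mk]
      split_ifs <;> first | exact mul_zero _ | (exfalso; omega)
    have hne' : (⟨j, hjdd⟩ : Fin d) ≠ ⟨j+1, hjd'⟩ := by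
      simp only [ne_eq, Fin.mk.injEq]
      omega
    rw [← Finset.sum_subset (Finset.subset_univ _) key, Finset.sum_pair hne']
    have V1 : Pvert m d ⟨j, hjdd⟩ ⟨j - 1, hid⟩ = (m : ℝ) := by
      rw [Pvert_mk, if_neg (by omega), if_neg (by omega), if_neg (by omega), if_pos (by omega)]
    have V2 : Pvert m d ⟨j+1, hjd'⟩ ⟨j - 1, hid⟩ = 1 := by
      rw [Pvert_mk, if_neg (by omega), if_neg (by omega), if_pos (by omega)]
    rw [V1, V2]
    simp only [hLdef, dif_pos hjdd, dif_pos hjd']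
    ring
  -- chain of positive fractional parts
  have hchain : ∀ t : ℕ, t ≤ k - 1 →
      ∃ c : ℤ, 0 < c ∧ ¬ ((m : ℤ) ∣ c) ∧ L (2 + t) = (c : ℝ) / (m : ℝ) ^ (k - t) := by
    intro t ht
    induction t with
    | zero =>
      refine ⟨b, by exact_mod_cast hb1, by exact_mod_cast hbm, ?_⟩
      have h2d : 2 < d := by omega
      simp only [hLdef, Nat.add_zero, dif_pos h2d, Nat.sub_zero]
      rw [h2]
      norm_num
    | succ t ih =>
      have ht' : t ≤ k - 1 := by omega
      obtain ⟨c, hc0, hcm, hcL⟩ := ih ht'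
      obtain ⟨z, hz⟩ := hrel (2 + t) (by omega) (by omega)
      set e : ℕ := k - (t + 1) with he
      have hke : k - t = e + 1 := by omega
      have he1 : 1 ≤ e := by omega
      have hme : (0:ℝ) < (m:ℝ) ^ e := by positivity
      have hnum : L (2 + (t + 1)) = ((z * (m : ℤ) ^ e - c : ℤ) : ℝ) / (m : ℝ) ^ e := by
        have h3t : 2 + (t + 1) = (2 + t) + 1 := by ring
        rw [h3t]
        have hstep : L ((2 + t) + 1) = (z : ℝ) - (m : ℝ) * L (2 + t) := by linarith
        rw [hstep, hcL, hke]
        push_cast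
        field_simp
        ring
      have hdvd : (m : ℤ) ∣ z * (m : ℤ) ^ e := Dvd.dvd.mul_left (dvd_pow_self _ (by omega)) z
      have hnd : ¬ ((m : ℤ) ∣ (z * (m : ℤ) ^ e - c)) := by
        intro h
        apply hcm
        have : (m : ℤ) ∣ (z * (m : ℤ) ^ e - (z * (m : ℤ) ^ e - c)) := dvd_sub hdvd h
        simpa using this
      have hQ : (0:ℝ) ≤ ((z * (m : ℤ) ^ e - c : ℤ) : ℝ) := by
        have h1 : 0 ≤ L (2 + (t + 1)) := hLnonneg _
        rw [hnum] at h1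
        have := mul_nonneg h1 hme.le
        rwa [div_mul_cancel₀ _ (ne_of_gt hme)] at this
      have hQ' : (0:ℤ) ≤ z * (m : ℤ) ^ e - c := by exact_mod_cast hQ
      have hne0 : z * (m : ℤ) ^ e - c ≠ 0 := by
        intro h
        exact hnd (h ▸ dvd_zero _)
      exact ⟨z * (m : ℤ) ^ e - c, lt_of_le_of_ne hQ' (Ne.symm hne0), hnd, hnum⟩
  -- positivity of L j for 2 ≤ j ≤ k + 1
  have hpos : ∀ j : ℕ, 2 ≤ j → j ≤ k + 1 → 0 < L j := by
    intro j hj2 hjk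
    obtain ⟨c, hc0, -, hcL⟩ := hchain (j - 2) (by omega)
    have : 2 + (j - 2) = j := by omega
    rw [this] at hcL
    rw [hcL]
    have : (0:ℝ) < (c:ℝ) := by exact_mod_cast hc0
    positivity
  -- pair bound
  have hpair : ∀ j : ℕ, 2 ≤ j → j ≤ k → 1 / (m:ℝ) ≤ L j + L (j + 1) := by
    intro j hj2 hjk
    obtain ⟨z, hz⟩ := hrel j hj2 (by omega)
    have hLj : 0 < L j := hpos j hj2 (by omega)
    have hLj1 : 0 ≤ L (j + 1) := hLnonneg _
    have hz1 : (1:ℝ) ≤ (z:ℝ) := by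
      have h0 : (0:ℝ) < (z:ℝ) := by nlinarith
      have : (0:ℤ) < z := by exact_mod_cast h0
      exact_mod_cast this
    have hm1 : (1:ℝ) ≤ (m:ℝ) := by exact_mod_cast Nat.one_le_of_lt hm
    rw [div_le_iff₀ hm0]
    nlinarith [mul_nonneg (sub_nonneg.mpr hm1) hLj1]
  -- summing the pairs
  have hsum : ∀ n : ℕ, 2 * n ≤ k →
      (n : ℝ) * (1 / (m:ℝ)) ≤ ∑ j ∈ Finset.Ico 2 (2 + 2 * n), L j := by
    intro n
    induction n with
    | zero => simp
    | succ n ih =>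
      intro hn
      have h1 : 2 + 2 * (n + 1) = ((2 + 2 * n) + 1) + 1 := by ring
      rw [h1, Finset.sum_Ico_succ_top (by omega), Finset.sum_Ico_succ_top (by omega)]
      have h2' := ih (by omega)
      have h3 := hpair (2 + 2 * n) (by omega) (by omega)
      push_cast
      have : 2 + 2 * n + 1 = (2 + 2 * n) + 1 := rfl
      linarith
  have h2K : 2 * (k / 2) ≤ k := by omega
  have main := hsum (k / 2) h2K
  have hsub : Finset.Ico 2 (2 + 2 * (k / 2)) ⊆ Finset.range d := by
    intro x hx
    simp only [Finset.mem_Ico] at hx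
    simp only [Finset.mem_range]
    omega
  have hmono : ∑ j ∈ Finset.Ico 2 (2 + 2 * (k / 2)), L j ≤ ∑ j ∈ Finset.range d, L j :=
    Finset.sum_le_sum_of_subset_of_nonneg hsub (fun i _ _ => hLnonneg i)
  have heq : ∑ j ∈ Finset.range d, L j = ∑ j, lam j := by
    rw [← Fin.sum_univ_eq_sum_range]
    refine Finset.sum_congr rfl fun x _ => ?_
    simp [hLdef, x.isLt]
  linarith
end

section
/- Fix integers m ≥ 2 and d ≥ 4, and let λ = (λ_0, …, λ_{d−1}) be a fundamental parallelepiped point of P_{m,d}. Then for every index t with 2 ≤ t ≤ d−2 such that λ_t ≠ 0 and λ_{t+1} ≠ 0, one has λ_t + λ_{t+1} > 1/m. -/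
open scoped BigOperators Pointwise

theorem stmt10 (m d : ℕ) (hm : 2 ≤ m) (hd : 4 ≤ d) (lam : Fin d → ℝ)
    (hlam : IsFPP (Pvert m d) lam) (t : ℕ) (ht1 : 2 ≤ t) (ht2 : t ≤ d - 2)
    (hne1 : lam ⟨t, by omega⟩ ≠ 0) (hne2 : lam ⟨t + 1, by omega⟩ ≠ 0) :
    1 / (m : ℝ) < lam ⟨t, by omega⟩ + lam ⟨t + 1, by omega⟩ := by
  obtain ⟨hb, -, hint⟩ := hlam
  have htd : t + 1 < d := by omega
  set a : Fin d := ⟨t, by omega⟩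
  set b : Fin d := ⟨t + 1, by omega⟩
  have hav : (a : ℕ) = t := rfl
  have hbv : (b : ℕ) = t + 1 := rfl
  obtain ⟨z, hz⟩ := hint ⟨t - 1, by omega⟩
  have hsum : ∑ j, lam j * Pvert m d j ⟨t - 1, by omega⟩
      = lam a * (m : ℝ) + lam b * 1 := by
    rw [Fintype.sum_eq_add a b (by simp [a, b, Fin.ext_iff])]
    · congr 1
      · congr 1
        rw [show Pvert m d a ⟨t - 1, by omega⟩ =
            (if t = 0 then 0 else if t = 1 then (if t - 1 = 0 then 1 else 0)
              else if t - 1 = t - 2 then 1 else if t - 1 = t - 1 then (m : ℝ)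
              else 0) from rfl]
        split_ifs <;> first | ring1 | contradiction | (exfalso; omega)
      · congr 1
        rw [show Pvert m d b ⟨t - 1, by omega⟩ =
            (if t + 1 = 0 then 0
              else if t + 1 = 1 then (if t - 1 = 0 then 1 else 0)
              else if t - 1 = t + 1 - 2 then 1
              else if t - 1 = t + 1 - 1 then (m : ℝ) else 0) from rfl]
        split_ifs <;> first | ring1 | contradiction | (exfalso; omega)
    · rintro c ⟨hca, hcb⟩
      have hca' : (c : ℕ) ≠ t := fun h => hca (Fin.ext h)
      have hcb' : (c : ℕ) ≠ t + 1 := fun h => hcb (Fin.ext h)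
      have hc := c.2
      simp only [Pvert, Fin.val_mk]
      split_ifs with h1 h2 h3 h4 <;> first | ring1 | contradiction | (exfalso; omega)
  rw [hsum] at hz
  have ha0 : 0 < lam a := lt_of_le_of_ne (hb a).1 (Ne.symm hne1)
  have hb0 : 0 < lam b := lt_of_le_of_ne (hb b).1 (Ne.symm hne2)
  have hm' : (2 : ℝ) ≤ (m : ℝ) := by exact_mod_cast hm
  have hz1 : (1 : ℝ) ≤ (z : ℝ) := by
    have : (0 : ℝ) < (z : ℝ) := by nlinarith
    exact_mod_cast (by exact_mod_cast this : (0:ℤ) < z)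
  rw [div_lt_iff₀ (by linarith)]
  nlinarith
end

section
/- Fix integers h ≥ 2 and k with ⌈3(h−1)/2⌉ ≤ k ≤ 3h−3. Then there exists N such that for all d ≥ N, the number of fundamental parallelepiped points λ = (λ_0, …, λ_{d−1}) of P_{2,d} whose height Σ_j λ_j equals h and whose coordinate λ_2 equals b/2^k for some odd integer b with 0 < b < 2^k, is exactly f(k,h). -/
open scoped BigOperators Pointwise

/-- Binomial coefficient `C(a,b)` for integers, with `C(a,b) = 0` when `b < 0` or `b > a`. -/
def binomZ (a b : ℤ) : ℤ := if 0 ≤ b ∧ b ≤ a then (a.toNat.choose b.toNat : ℤ) else 0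

/-- `f(k,h) = 2[C(k-2, 3(h-1)-k) + C(k-2, 3(h-1)-k-1) + C(k-2, 3(h-1)-k-2)]`. -/
def fkh (k h : ℤ) : ℤ :=
  2 * (binomZ (k - 2) (3 * (h - 1) - k) + binomZ (k - 2) (3 * (h - 1) - k - 1) +
    binomZ (k - 2) (3 * (h - 1) - k - 2))

/-!
By the lattice conditions `λ_1 + λ_2 ∈ ℤ` and `2 λ_j + λ_{j+1} ∈ ℤ` (`j ≥ 2`), we have
`λ_{j+2} ≡ (-2)^j λ_2 (mod 1)`. For `λ_2 = b / 2^k` with `b` odd this forces `λ_{k+1} = 1/2`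
and `λ_j = 0` for `j > k + 1`. Reading downwards, `λ_j = (c_j - λ_{j+1}) / 2` for `2 ≤ j ≤ k`,
where the digits `c_j = 2 λ_j + λ_{j+1} ∈ {1, 2}` can be chosen freely, and `λ_1 = 1 - λ_2`;
every choice gives a point with `λ_2` odd over `2^k`. Telescoping the sum gives
`3 λ_0 = 3h - 4 - (c_3 + ⋯ + c_k) - λ_3` with `0 < λ_3 < 1`, so `0 ≤ λ_0 < 1` says that the
number of digits `c_3, …, c_k` equal to `2` lies in `[3(h-1) - k - 2, 3(h-1) - k]`, while `c_2`
is free.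
-/

open Finset

def bitDigit (s : ℕ → Bool) (i : ℕ) : ℝ := if s i then 2 else 1

/-- `chainVal s m` is the coordinate `λ_{k+1-m}` of the point with digits `s`, read downwards from
`λ_{k+1} = 1/2`: the bit `s m` chooses the integer `2 λ_{k-m} + λ_{k+1-m} ∈ {1, 2}`. -/
noncomputable def chainVal (s : ℕ → Bool) : ℕ → ℝ
  | 0 => 1 / 2
  | m + 1 => (bitDigit s m - chainVal s m) / 2

noncomputable def bitsOf (ν : ℕ → ℝ) (i : ℕ) : Bool := decide (2 * ν (i + 1) + ν i = 2)

section chainVal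

variable (s : ℕ → Bool)

lemma two_mul_chainVal_succ_add (m : ℕ) :
    2 * chainVal s (m + 1) + chainVal s m = bitDigit s m := by
  rw [chainVal]; ring

lemma exists_odd_chainVal_eq (m : ℕ) :
    ∃ o : ℤ, Odd o ∧ 0 < o ∧ o < 2 ^ (m + 1) ∧ chainVal s m = o / 2 ^ (m + 1) := by
  induction m with
  | zero => exact ⟨1, odd_one, one_pos, by norm_num, by norm_num [chainVal]⟩
  | succ m ih =>
    obtain ⟨o, ho, ho0, ho1, hm⟩ := ih
    set c : ℤ := if s m then 2 else 1
    have hc : bitDigit s m = c := by unfold bitDigit c; split_ifs <;> norm_num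
    have hc1 : 1 ≤ c ∧ c ≤ 2 := by unfold c; split_ifs <;> norm_num
    have hpow : (2 : ℤ) ^ (m + 2) = 2 * 2 ^ (m + 1) := by ring
    refine ⟨c * 2 ^ (m + 1) - o, ?_, by nlinarith, by nlinarith, ?_⟩
    · exact ((even_two.pow_of_ne_zero m.succ_ne_zero).mul_left c).sub_odd ho
    · rw [chainVal, hm, hc]
      push_cast
      field_simp
      ring

lemma chainVal_pos (m : ℕ) : 0 < chainVal s m := by
  obtain ⟨o, -, ho0, -, hm⟩ := exists_odd_chainVal_eq s m
  rw [hm]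
  exact div_pos (by exact_mod_cast ho0) (by positivity)

lemma chainVal_lt_one (m : ℕ) : chainVal s m < 1 := by
  obtain ⟨o, -, -, ho1, hm⟩ := exists_odd_chainVal_eq s m
  rw [hm, div_lt_one (by positivity)]
  exact_mod_cast ho1

lemma chainVal_congr {s' : ℕ → Bool} {m : ℕ} (hs : ∀ i < m, s i = s' i) :
    chainVal s m = chainVal s' m := by
  induction m with
  | zero => rfl
  | succ m ih =>
    simp only [chainVal, bitDigit, hs m m.lt_succ_self, ih fun i hi => hs i (by omega)]

lemma three_mul_sum_chainVal (m : ℕ) :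
    3 * ∑ i ∈ range (m + 1), chainVal s i = 1 + ∑ i ∈ range m, bitDigit s i + chainVal s m := by
  induction m with
  | zero => norm_num [chainVal]
  | succ m ih =>
    rw [sum_range_succ _ (m + 1), mul_add, ih, sum_range_succ _ m, ← two_mul_chainVal_succ_add]
    ring

lemma bitsOf_chainVal : bitsOf (chainVal s) = s := by
  funext i
  rw [bitsOf, two_mul_chainVal_succ_add, bitDigit]
  cases s i <;> norm_num

end chainVal

lemma eq_chainVal_bitsOf {ν : ℕ → ℝ} {N : ℕ} (h0 : ν 0 = 1 / 2) (hν : ∀ m, 0 ≤ ν m ∧ ν m < 1)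
    (hint : ∀ m < N, ∃ z : ℤ, 2 * ν (m + 1) + ν m = z) :
    ∀ m ≤ N, ν m = chainVal (bitsOf ν) m := by
  intro m
  induction m with
  | zero => exact fun _ => h0
  | succ m ih =>
    intro hm
    have hνm := ih (by omega)
    obtain ⟨z, hz⟩ := hint m (by omega)
    have hpos := chainVal_pos (bitsOf ν) m
    have hlt := chainVal_lt_one (bitsOf ν) m
    have hz0 : (0 : ℤ) < z := by exact_mod_cast (by linarith [hν (m + 1)] : (0 : ℝ) < z)
    have hz3 : z < (3 : ℤ) := by exact_mod_cast (by linarith [hν (m + 1)] : (z : ℝ) < 3)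
    rw [chainVal, ← hνm, bitDigit, bitsOf, hz]
    obtain rfl | rfl : z = 1 ∨ z = 2 := by omega
    all_goals push_cast at hz; norm_num; linarith

lemma exists_sub_neg_two_pow_mul_eq {μ : ℕ → ℝ}
    (hint : ∀ j ≥ 2, ∃ z : ℤ, 2 * μ j + μ (j + 1) = z) (m : ℕ) :
    ∃ z : ℤ, μ (m + 2) - (-2) ^ m * μ 2 = z := by
  induction m with
  | zero => exact ⟨0, by simp⟩
  | succ m ih =>
    obtain ⟨z, hz⟩ := ih
    obtain ⟨z', hz'⟩ := hint (m + 2) (by omega)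
    exact ⟨z' - 2 * z, by push_cast; linear_combination hz' - 2 * hz⟩

/-- `μ (n + 3) ≡ (-2) ^ (n + 1) b / 2 ^ (n + 2) = ± b / 2 (mod 1)` with `b` odd. -/
lemma eq_half_of_eq_odd_div {μ : ℕ → ℝ} (hμ : ∀ j, 0 ≤ μ j ∧ μ j < 1)
    (hint : ∀ j ≥ 2, ∃ z : ℤ, 2 * μ j + μ (j + 1) = z) {n : ℕ} {b : ℤ} (hb : Odd b)
    (h2 : μ 2 = b / 2 ^ (n + 2)) :
    μ (n + 3) = 1 / 2 := by
  obtain ⟨z, hz⟩ := exists_sub_neg_two_pow_mul_eq hint (n + 1)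
  have hsign : (-2 : ℝ) ^ (n + 1) * μ 2 = (-1) ^ (n + 1) * b / 2 := by
    rw [h2, neg_pow, pow_succ 2 (n + 1)]
    field_simp
  obtain ⟨q, hq, hμq⟩ : ∃ q : ℤ, Odd q ∧ 2 * μ (n + 3) = q := by
    rcases neg_one_pow_eq_or ℝ (n + 1) with he | he
    · exact ⟨2 * z + b, (even_two_mul z).add_odd hb, by
        push_cast; linear_combination 2 * hz + 2 * hsign + b * he⟩
    · exact ⟨2 * z - b, (even_two_mul z).sub_odd hb, by
        push_cast; linear_combination 2 * hz + 2 * hsign + b * he⟩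
  have hq0 : (0 : ℤ) ≤ q := by exact_mod_cast (by linarith [hμ (n + 3)] : (0 : ℝ) ≤ q)
  have hq2 : q < (2 : ℤ) := by exact_mod_cast (by linarith [hμ (n + 3)] : (q : ℝ) < 2)
  obtain rfl : q = 1 := by obtain ⟨r, rfl⟩ := hq; omega
  push_cast at hμq
  linarith

lemma eq_zero_of_eq_half {μ : ℕ → ℝ} (hμ : ∀ j, 0 ≤ μ j ∧ μ j < 1)
    (hint : ∀ j ≥ 2, ∃ z : ℤ, 2 * μ j + μ (j + 1) = z) {n : ℕ} (hhalf : μ (n + 3) = 1 / 2) :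
    ∀ j ≥ n + 4, μ j = 0 := by
  intro j hj
  induction j, hj using Nat.le_induction with
  | base =>
    obtain ⟨z, hz⟩ := hint (n + 3) (by omega)
    rw [hhalf] at hz
    have hz1 : (1 : ℤ) ≤ z := by exact_mod_cast (by linarith [hμ (n + 4)] : (1 : ℝ) ≤ z)
    have hz2 : z < (2 : ℤ) := by exact_mod_cast (by linarith [hμ (n + 4)] : (z : ℝ) < 2)
    obtain rfl : z = 1 := by omega
    push_cast at hz
    linarith
  | succ j hj ih =>
    obtain ⟨z, hz⟩ := hint j (by omega)
    rw [ih] at hz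
    have hz0 : (0 : ℤ) ≤ z := by exact_mod_cast (by linarith [hμ (j + 1)] : (0 : ℝ) ≤ z)
    have hz1 : z < (1 : ℤ) := by exact_mod_cast (by linarith [hμ (j + 1)] : (z : ℝ) < 1)
    obtain rfl : z = 0 := by omega
    push_cast at hz
    linarith

lemma Pvert_two_apply {d : ℕ} (j : Fin d) (i : Fin (d - 1)) :
    Pvert 2 d j i =
      (if (j : ℕ) = i + 2 then 1 else 0) +
        (if (j : ℕ) = i + 1 then if (i : ℕ) = 0 then 1 else 2 else 0) := by
  unfold Pvert
  split_ifs <;> first | (exfalso; omega) | norm_num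

lemma sum_mul_Pvert_two {d : ℕ} (μ : ℕ → ℝ) (hμd : μ d = 0) (i : Fin (d - 1)) :
    ∑ j : Fin d, μ j * Pvert 2 d j i =
      if (i : ℕ) = 0 then μ 1 + μ 2 else 2 * μ (i + 1) + μ (i + 2) := by
  have hi := i.isLt
  have htop : (if (i : ℕ) + 2 ∈ range d then μ (i + 2) else 0) = μ (i + 2) := by
    split_ifs with h
    · rfl
    · rw [show (i : ℕ) + 2 = d by simp at h; omega, hμd]
  calc ∑ j : Fin d, μ j * Pvert 2 d j i
      = ∑ j ∈ range d, ((if j = i + 2 then μ (i + 2) else 0) +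
          if j = i + 1 then (if (i : ℕ) = 0 then 1 else 2) * μ (i + 1) else 0) := by
        rw [← Fin.sum_univ_eq_sum_range]
        refine sum_congr rfl fun j _ => ?_
        rw [Pvert_two_apply]
        split_ifs <;> simp_all [mul_comm]
    _ = _ := by
        rw [sum_add_distrib, sum_ite_eq', sum_ite_eq', htop, if_pos (mem_range.2 (by omega))]
        split_ifs with h0
        · rw [h0]; ring
        · ring

lemma isFPP_Pvert_two_iff {d : ℕ} (μ : ℕ → ℝ) (hμd : ∀ j ≥ d, μ j = 0) :
    IsFPP (Pvert 2 d) (fun j : Fin d => μ j) ↔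
      (∀ j, 0 ≤ μ j ∧ μ j < 1) ∧ (∃ z : ℤ, ∑ j ∈ range d, μ j = z) ∧
        (∃ z : ℤ, μ 1 + μ 2 = z) ∧ ∀ j ≥ 2, ∃ z : ℤ, 2 * μ j + μ (j + 1) = z := by
  have hbounds : (∀ j : Fin d, 0 ≤ μ j ∧ μ j < 1) ↔ ∀ j, 0 ≤ μ j ∧ μ j < 1 :=
    ⟨fun h j => if hj : j < d then h ⟨j, hj⟩ else by simp [hμd j (by omega)], fun h j => h j⟩
  have hlattice : (∀ i : Fin (d - 1), ∃ z : ℤ, ∑ j : Fin d, μ j * Pvert 2 d j i = z) ↔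
      (∃ z : ℤ, μ 1 + μ 2 = z) ∧ ∀ j ≥ 2, ∃ z : ℤ, 2 * μ j + μ (j + 1) = z := by
    simp only [sum_mul_Pvert_two μ (hμd d le_rfl)]
    constructor
    · intro h
      refine ⟨?_, fun j hj => ?_⟩
      · by_cases hd : 2 ≤ d
        · simpa using h ⟨0, by omega⟩
        · exact ⟨0, by simp [hμd 1 (by omega), hμd 2 (by omega)]⟩
      · by_cases hjd : j < d
        · obtain ⟨z, hz⟩ := h ⟨j - 1, by omega⟩
          dsimp only at hz
          rw [if_neg (by omega), show j - 1 + 1 = j by omega, show j - 1 + 2 = j + 1 by omega] at hz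
          exact ⟨z, hz⟩
        · exact ⟨0, by simp [hμd j (by omega), hμd (j + 1) (by omega)]⟩
    · rintro ⟨h12, h⟩ i
      split_ifs
      · exact h12
      · exact h (i + 1) (by omega)
  unfold IsFPP
  rw [hbounds, hlattice, Fin.sum_univ_eq_sum_range]

/-- Indexed so that `k = n + 2`: coordinates `2, …, n + 3` are
`chainVal s (n + 1), …, chainVal s 0`, and coordinate `0` makes the height `h`. -/
noncomputable def fppOfBits (h : ℤ) (n : ℕ) (s : ℕ → Bool) : ℕ → ℝ
  | 0 => h - (1 - chainVal s (n + 1)) - ∑ m ∈ range (n + 2), chainVal s m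
  | 1 => 1 - chainVal s (n + 1)
  | j + 2 => if j ≤ n + 1 then chainVal s (n + 1 - j) else 0

section fppOfBits

variable (h : ℤ) (n : ℕ) (s : ℕ → Bool)

lemma fppOfBits_sub_rev {m : ℕ} (hm : m ≤ n + 1) :
    fppOfBits h n s (n + 3 - m) = chainVal s m := by
  rw [show n + 3 - m = (n + 1 - m) + 2 by omega, fppOfBits, if_pos (by omega),
    show n + 1 - (n + 1 - m) = m by omega]

lemma fppOfBits_eq_zero_of_le {j : ℕ} (hj : n + 4 ≤ j) : fppOfBits h n s j = 0 := by
  obtain ⟨j, rfl⟩ : ∃ i, j = i + 2 := ⟨j - 2, by omega⟩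
  exact if_neg (by omega)

lemma sum_range_fppOfBits {d : ℕ} (hd : n + 4 ≤ d) : ∑ j ∈ range d, fppOfBits h n s j = h := by
  rw [← sum_subset (range_mono hd) fun j _ hj => fppOfBits_eq_zero_of_le h n s (by simpa using hj),
    sum_range_succ', sum_range_succ']
  have hmid : ∑ j ∈ range (n + 2), fppOfBits h n s (j + 1 + 1) =
      ∑ m ∈ range (n + 2), chainVal s m := by
    rw [← sum_range_reflect]
    refine sum_congr rfl fun j hj => ?_
    rw [mem_range] at hj
    rw [fppOfBits, if_pos (by omega)]
    congr 1
    omega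
  rw [hmid, fppOfBits, fppOfBits]
  ring

lemma three_mul_fppOfBits_zero :
    3 * fppOfBits h n s 0 = 3 * h - 4 - ∑ i ∈ range n, bitDigit s i - chainVal s n := by
  have hsum := three_mul_sum_chainVal s (n + 1)
  rw [sum_range_succ _ n, ← two_mul_chainVal_succ_add s n] at hsum
  rw [fppOfBits]
  linarith

lemma exists_two_mul_fppOfBits_add {j : ℕ} (hj : 2 ≤ j) :
    ∃ z : ℤ, 2 * fppOfBits h n s j + fppOfBits h n s (j + 1) = z := by
  obtain ⟨j, rfl⟩ : ∃ i, j = i + 2 := ⟨j - 2, by omega⟩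
  rw [fppOfBits, show j + 2 + 1 = (j + 1) + 2 by ring, fppOfBits]
  rcases lt_trichotomy j (n + 1) with hj | rfl | hj
  · refine ⟨if s (n - j) then 2 else 1, ?_⟩
    rw [if_pos (by omega), if_pos (by omega), show n + 1 - j = (n - j) + 1 by omega,
      show n + 1 - (j + 1) = n - j by omega, two_mul_chainVal_succ_add, bitDigit]
    split_ifs <;> norm_num
  · exact ⟨1, by simp [chainVal]⟩
  · exact ⟨0, by rw [if_neg (by omega), if_neg (by omega)]; simp⟩

lemma isFPP_fppOfBits {d : ℕ} (hd : n + 4 ≤ d)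
    (h0 : 0 ≤ fppOfBits h n s 0 ∧ fppOfBits h n s 0 < 1) :
    IsFPP (Pvert 2 d) (fun j : Fin d => fppOfBits h n s j) := by
  have hw := fun m => And.intro (chainVal_pos s m) (chainVal_lt_one s m)
  rw [isFPP_Pvert_two_iff (fppOfBits h n s) fun j hj => fppOfBits_eq_zero_of_le h n s (by omega)]
  refine ⟨fun j => ?_, ⟨h, sum_range_fppOfBits h n s hd⟩, ⟨1, by simp [fppOfBits]⟩,
    fun j hj => exists_two_mul_fppOfBits_add h n s hj⟩
  rcases j with _ | _ | j
  · exact h0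
  · simp only [fppOfBits]
    constructor <;> linarith [hw (n + 1)]
  · simp only [fppOfBits]
    split_ifs
    · exact ⟨(hw _).1.le, (hw _).2⟩
    · norm_num

lemma fppOfBits_congr {s' : ℕ → Bool} (hs : ∀ i ≤ n, s i = s' i) :
    fppOfBits h n s = fppOfBits h n s' := by
  have hc : ∀ m ≤ n + 1, chainVal s m = chainVal s' m :=
    fun m hm => chainVal_congr s fun i hi => hs i (by omega)
  funext j
  rcases j with _ | _ | j
  · simp only [fppOfBits, hc (n + 1) le_rfl]
    rw [sum_congr rfl fun m hm => hc m (by simp at hm; omega)]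
  · simp only [fppOfBits, hc (n + 1) le_rfl]
  · simp only [fppOfBits]
    split_ifs
    · exact hc _ (by omega)
    · rfl

end fppOfBits

lemma eq_fppOfBits {μ : ℕ → ℝ} {h : ℤ} {n d : ℕ} (hd : n + 4 ≤ d) (hμd : ∀ j ≥ d, μ j = 0)
    (hμ : ∀ j, 0 ≤ μ j ∧ μ j < 1) (hsum : ∑ j ∈ range d, μ j = h)
    (h12 : ∃ z : ℤ, μ 1 + μ 2 = z) (hint : ∀ j ≥ 2, ∃ z : ℤ, 2 * μ j + μ (j + 1) = z)
    {b : ℤ} (hb : Odd b) (h2 : μ 2 = b / 2 ^ (n + 2)) :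
    μ = fppOfBits h n (bitsOf fun m => μ (n + 3 - m)) := by
  set s := bitsOf fun m => μ (n + 3 - m)
  have hhalf := eq_half_of_eq_odd_div hμ hint hb h2
  have hchain : ∀ m ≤ n + 1, μ (n + 3 - m) = chainVal s m := by
    refine eq_chainVal_bitsOf (by simpa using hhalf) (fun m => hμ _) fun m hm => ?_
    obtain ⟨z, hz⟩ := hint (n + 2 - m) (by omega)
    rw [show n + 2 - m + 1 = n + 3 - m by omega] at hz
    exact ⟨z, by rw [show n + 3 - (m + 1) = n + 2 - m by omega]; exact hz⟩
  have hμ2 : μ 2 = chainVal s (n + 1) := by simpa using hchain (n + 1) le_rfl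
  have hpos : ∀ j, μ (j + 1) = fppOfBits h n s (j + 1) := by
    rintro (_ | j)
    · obtain ⟨z, hz⟩ := h12
      have hz1 : (0 : ℤ) < z := by
        exact_mod_cast (by linarith [hμ 1, chainVal_pos s (n + 1)] : (0 : ℝ) < z)
      have hz2 : z < (2 : ℤ) := by
        exact_mod_cast (by linarith [hμ 1, chainVal_lt_one s (n + 1)] : (z : ℝ) < 2)
      obtain rfl : z = 1 := by omega
      rw [zero_add, fppOfBits, ← hμ2]
      push_cast at hz
      linarith
    · rw [fppOfBits]
      split_ifs with hj
      · rw [← hchain _ (by omega), show n + 3 - (n + 1 - j) = j + 1 + 1 by omega]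
      · exact eq_zero_of_eq_half hμ hint hhalf _ (by omega)
  obtain ⟨d, rfl⟩ : ∃ d', d = d' + 1 := ⟨d - 1, by omega⟩
  have hsumF := sum_range_fppOfBits h n s hd
  rw [sum_range_succ'] at hsum hsumF
  rw [sum_congr rfl fun j _ => hpos j] at hsum
  funext j
  rcases j with _ | j
  · linarith
  · exact hpos j

/-- The bit `n` decides whether `λ_2 > 1/2`; it does not enter the height condition. -/
def bitSeq (n : ℕ) (b : Bool) (t : Finset (Fin n)) (i : ℕ) : Bool :=
  if hi : i < n then decide (⟨i, hi⟩ ∈ t) else b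

lemma sum_bitDigit_bitSeq (n : ℕ) (b : Bool) (t : Finset (Fin n)) :
    ∑ i ∈ range n, bitDigit (bitSeq n b t) i = n + #t := by
  rw [← Fin.sum_univ_eq_sum_range]
  have hi : ∀ i : Fin n, bitDigit (bitSeq n b t) i = 1 + if i ∈ t then 1 else 0 := by
    intro i
    rw [bitDigit, bitSeq, dif_pos i.isLt]
    by_cases hit : i ∈ t <;> simp [hit]; norm_num
  simp [hi, sum_add_distrib]

lemma bitSeq_filter_apply (n : ℕ) (s : ℕ → Bool) :
    ∀ i ≤ n, bitSeq n (s n) {i : Fin n | s i} i = s i := by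
  intro i hi
  rw [bitSeq]
  split_ifs with hin
  · simp
  · rw [show i = n by omega]

lemma eq_of_bitSeq_eq {n : ℕ} {p q : Bool × Finset (Fin n)}
    (hpq : ∀ i ≤ n, bitSeq n p.1 p.2 i = bitSeq n q.1 q.2 i) : p = q := by
  have h1 := hpq n le_rfl
  simp only [bitSeq, lt_irrefl, dite_false] at h1
  refine Prod.ext h1 (Finset.ext fun i => ?_)
  simpa [bitSeq] using hpq i i.isLt.le

lemma fppOfBits_zero_mem_Ico_iff (h : ℤ) (n : ℕ) (b : Bool) (t : Finset (Fin n)) :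
    (0 ≤ fppOfBits h n (bitSeq n b t) 0 ∧ fppOfBits h n (bitSeq n b t) 0 < 1) ↔
      (#t : ℤ) ∈ Icc (3 * h - 7 - n) (3 * h - 5 - n) := by
  set w := chainVal (bitSeq n b t) n
  have hw0 : 0 < w := chainVal_pos _ n
  have hw1 : w < 1 := chainVal_lt_one _ n
  have key : 3 * fppOfBits h n (bitSeq n b t) 0 = ((3 * h - 4 - n - #t : ℤ) : ℝ) - w := by
    rw [three_mul_fppOfBits_zero, sum_bitDigit_bitSeq]
    push_cast
    ring
  rw [mem_Icc]
  constructor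
  · rintro ⟨hl, hr⟩
    have h1 : (0 : ℝ) < ((3 * h - 4 - n - #t : ℤ) : ℝ) := by linarith
    have h2 : ((3 * h - 4 - n - #t : ℤ) : ℝ) < 4 := by linarith
    have h1' : (0 : ℤ) < 3 * h - 4 - n - #t := Int.cast_pos.1 h1
    have h2' : 3 * h - 4 - n - #t < (4 : ℤ) := by exact_mod_cast h2
    omega
  · rintro ⟨hl, hr⟩
    have h1 : (1 : ℝ) ≤ ((3 * h - 4 - n - #t : ℤ) : ℝ) := by
      exact_mod_cast (by omega : (1 : ℤ) ≤ _)
    have h2 : ((3 * h - 4 - n - #t : ℤ) : ℝ) ≤ 3 := by exact_mod_cast (by omega : _ ≤ (3 : ℤ))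
    constructor <;> linarith

lemma card_filter_card_eq (n : ℕ) (r : ℤ) :
    (#{t : Finset (Fin n) | (#t : ℤ) = r} : ℤ) = binomZ n r := by
  unfold binomZ
  split_ifs with hr
  · have hfilter : ({t | (#t : ℤ) = r} : Finset (Finset (Fin n))) = powersetCard r.toNat univ := by
      ext t
      simp only [mem_filter, mem_univ, true_and, mem_powersetCard, subset_univ]
      omega
    rw [hfilter, card_powersetCard, card_univ, Fintype.card_fin, Int.toNat_natCast]
  · rw [Nat.cast_eq_zero, card_eq_zero, filter_eq_empty_iff]
    intro t _ ht
    have := card_le_univ t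
    rw [Fintype.card_fin] at this
    omega

lemma card_filter_card_mem (n : ℕ) (R : Finset ℤ) :
    (#{t : Finset (Fin n) | (#t : ℤ) ∈ R} : ℤ) = ∑ r ∈ R, binomZ n r := by
  rw [card_eq_sum_card_fiberwise (f := fun t : Finset (Fin n) => (#t : ℤ)) (t := R)
    fun t ht => by simpa using ht]
  push_cast
  refine sum_congr rfl fun r hr => ?_
  rw [← card_filter_card_eq, filter_filter]
  congr 2
  exact filter_congr fun t _ => ⟨And.right, fun h => ⟨h ▸ hr, h⟩⟩

lemma injective_fppOfBits_bitSeq (h : ℤ) {n d : ℕ} (hd : n + 4 ≤ d) :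
    Function.Injective fun p : Bool × Finset (Fin n) =>
      fun j : Fin d => fppOfBits h n (bitSeq n p.1 p.2) j := by
  intro p q hpq
  have hval : ∀ m ≤ n + 1, chainVal (bitSeq n p.1 p.2) m = chainVal (bitSeq n q.1 q.2) m := by
    intro m hm
    simpa only [fppOfBits_sub_rev h n _ hm] using congrFun hpq ⟨n + 3 - m, by omega⟩
  refine eq_of_bitSeq_eq fun i hi => ?_
  rw [← bitsOf_chainVal (bitSeq n p.1 p.2), ← bitsOf_chainVal (bitSeq n q.1 q.2), bitsOf, bitsOf,
    hval i (by omega), hval (i + 1) (by omega)]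

lemma fppSet_eq_image {h : ℤ} {n d : ℕ} (hd : n + 4 ≤ d) :
    {lam : Fin d → ℝ | IsFPP (Pvert 2 d) lam ∧ (∑ j, lam j) = (h : ℝ) ∧
        ∃ b : ℤ, Odd b ∧ 0 < b ∧ b < 2 ^ (n + 2) ∧
          lam ⟨2, by omega⟩ = (b : ℝ) / (2 : ℝ) ^ (n + 2)} =
      (fun p : Bool × Finset (Fin n) => fun j : Fin d => fppOfBits h n (bitSeq n p.1 p.2) j) ''
        (Set.univ ×ˢ {t | (#t : ℤ) ∈ Icc (3 * h - 7 - n) (3 * h - 5 - n)}) := by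
  ext lam
  constructor
  · rintro ⟨hfpp, hsum, b, hb, -, -, h2⟩
    set μ := Function.extend Fin.val lam 0
    have hlam : lam = fun j : Fin d => μ j :=
      funext fun j => (Fin.val_injective.extend_apply lam 0 j).symm
    have hμd : ∀ j ≥ d, μ j = 0 :=
      fun j hj => Function.extend_apply' _ _ _ (by rintro ⟨a, rfl⟩; omega)
    rw [hlam, isFPP_Pvert_two_iff μ hμd] at hfpp
    obtain ⟨hμ, -, h12, hint⟩ := hfpp
    rw [hlam, Fin.sum_univ_eq_sum_range] at hsum
    rw [hlam] at h2
    have hμeq := eq_fppOfBits hd hμd hμ hsum h12 hint hb h2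
    set s := bitsOf fun m => μ (n + 3 - m)
    have hs := fppOfBits_congr h n _ (bitSeq_filter_apply n s)
    refine ⟨(s n, ({i | s i} : Finset (Fin n))),
      ⟨trivial, (fppOfBits_zero_mem_Ico_iff h n (s n) _).1 ?_⟩, ?_⟩
    · rw [hs, ← hμeq]
      exact hμ 0
    · rw [hlam]
      dsimp only
      rw [hs, ← hμeq]
  · rintro ⟨⟨b, t⟩, ⟨-, ht⟩, rfl⟩
    obtain ⟨o, ho, ho0, ho1, hw⟩ := exists_odd_chainVal_eq (bitSeq n b t) (n + 1)
    refine ⟨isFPP_fppOfBits h n _ hd ((fppOfBits_zero_mem_Ico_iff h n b t).2 ht), ?_,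
      o, ho, ho0, ho1, ?_⟩
    · rw [Fin.sum_univ_eq_sum_range (fppOfBits h n _)]
      exact sum_range_fppOfBits h n _ hd
    · simpa [fppOfBits] using hw

theorem stmt13 (h k : ℤ) (hh : 2 ≤ h)
    (hk1 : ⌈(3 * ((h : ℚ) - 1)) / 2⌉ ≤ k) :
    ∃ N : ℕ, ∀ d : ℕ, ∀ _hNd : N ≤ d, ∀ _hd : 3 ≤ d,
      (Set.ncard {lam : Fin d → ℝ | IsFPP (Pvert 2 d) lam ∧ (∑ j, lam j) = (h : ℝ) ∧
        ∃ b : ℤ, Odd b ∧ 0 < b ∧ b < 2 ^ k.toNat ∧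
          lam ⟨2, by omega⟩ = (b : ℝ) / (2 : ℝ) ^ k.toNat} : ℤ) = fkh k h := by
  have hk : 2 ≤ k := by
    have : (1 : ℤ) < ⌈(3 * ((h : ℚ) - 1)) / 2⌉ := by
      rw [Int.lt_ceil]
      have : (2 : ℚ) ≤ h := by exact_mod_cast hh
      push_cast
      linarith
    omega
  obtain ⟨n, rfl⟩ : ∃ n : ℕ, k = n + 2 := ⟨(k - 2).toNat, by omega⟩
  refine ⟨n + 4, fun d hd _ => ?_⟩
  rw [show ((n : ℤ) + 2).toNat = n + 2 by omega, fppSet_eq_image hd,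
    Set.ncard_image_of_injective _ (injective_fppOfBits_bitSeq h hd), Set.ncard_prod,
    Set.ncard_univ, Nat.card_eq_fintype_card, Fintype.card_bool, Set.ncard_eq_toFinset_card',
    Set.toFinset_ofPred]
  push_cast
  rw [card_filter_card_mem, show Icc (3 * h - 7 - n) (3 * h - 5 - n) =
    {3 * h - 7 - n, 3 * h - 6 - n, 3 * h - 5 - n} by ext; simp; omega]
  rw [sum_insert (by simp), sum_insert (by simp), sum_singleton, fkh]
  ring_nf
end

section
/- Define g(j) := Σ_{k=⌈3(j−1)/2⌉}^{3j−3} f(k,j) for integers j ≥ 2. Then for every integer j ≥ 4, one has g(j) = 4·g(j−1) + g(j−2). -/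
open scoped BigOperators Pointwise

/-- `g(j) = ∑_{k=⌈3(j-1)/2⌉}^{3j-3} f(k,j)`. -/
noncomputable def gsum (j : ℤ) : ℤ :=
  ∑ k ∈ Finset.Icc ⌈(3 * ((j : ℚ) - 1)) / 2⌉ (3 * j - 3), fkh k j


/-! Each of the three binomial sums making up `g(j)` runs along a shifted diagonal of Pascal's
triangle, hence is a Fibonacci number: `g(j) = 2 (F(3j-4) + F(3j-5) + F(3j-6)) = 4 F(3j-4)`.
The recurrence is then the Fibonacci identity `F(n+6) = 4 F(n+3) + F(n)`. -/

lemma binomZ_eq_zero {a b : ℤ} (h : ¬(0 ≤ b ∧ b ≤ a)) : binomZ a b = 0 :=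
  if_neg h

lemma binomZ_natCast (a b : ℕ) : binomZ a b = a.choose b := by
  unfold binomZ
  split_ifs with h
  · simp
  · rw [Nat.choose_eq_zero_of_lt (by omega), Nat.cast_zero]

theorem sum_binomZ_diagonal (m d : ℤ) (s : Finset ℤ)
    (hs : ∀ k, m ≤ 2 * k → k ≤ m → k + d ∈ s) :
    ∑ k ∈ s, binomZ (k - d) (m - (k - d)) = (m + 1).toNat.fib := by
  rcases lt_or_ge m 0 with hm | hm
  · rw [show (m + 1).toNat = 0 by omega, Nat.fib_zero, Nat.cast_zero]
    exact Finset.sum_eq_zero fun k _ => binomZ_eq_zero (by omega)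
  lift m to ℕ using hm
  rw [show ((m : ℤ) + 1).toNat = m + 1 by omega, Nat.fib_succ_eq_sum_choose, Nat.cast_sum,
    eq_comm]
  -- `p ↦ p.1 + d` matches the nonzero terms of the antidiagonal with those of the sum
  refine Finset.sum_bij_ne_zero (fun p _ _ => (p.1 : ℤ) + d) ?_ ?_ ?_ ?_
  · intro p hp hne
    rw [Finset.HasAntidiagonal.mem_antidiagonal] at hp
    have : p.2 ≤ p.1 := by
      by_contra! hlt
      exact hne (by rw [Nat.choose_eq_zero_of_lt hlt, Nat.cast_zero])
    exact hs _ (by omega) (by omega)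
  · intro p hp _ q hq _ h
    rw [Finset.HasAntidiagonal.mem_antidiagonal] at hp hq
    ext <;> omega
  · intro k _ hne
    have hk : 0 ≤ m - (k - d) ∧ m - (k - d) ≤ k - d := by
      by_contra h
      exact hne (binomZ_eq_zero (by omega))
    refine ⟨((k - d).toNat, m - (k - d).toNat),
      by rw [Finset.HasAntidiagonal.mem_antidiagonal]; omega,
      Nat.cast_ne_zero.2 (Nat.choose_pos (by omega)).ne', by simp only; omega⟩
  · intro p hp _
    rw [Finset.HasAntidiagonal.mem_antidiagonal] at hp
    rw [add_sub_cancel_right, show (m : ℤ) - p.1 = (p.2 : ℕ) by omega, binomZ_natCast]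

lemma mem_gsum_range {j k : ℤ} (hlo : 3 * j - 3 ≤ 2 * k) (hhi : k ≤ 3 * j - 3) :
    k ∈ Finset.Icc ⌈(3 * ((j : ℚ) - 1)) / 2⌉ (3 * j - 3) := by
  refine Finset.mem_Icc.2 ⟨Int.ceil_le.2 ?_, hhi⟩
  rw [div_le_iff₀ two_pos]
  exact_mod_cast (by linarith : 3 * (j - 1) ≤ k * 2)

lemma gsum_eq_four_mul_fib (j : ℤ) (hj : 2 ≤ j) : gsum j = 4 * (3 * j - 4).toNat.fib := by
  have diagonal (i : ℤ) (hi₀ : 0 ≤ i) (hi₂ : i ≤ 2) :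
      ∑ k ∈ Finset.Icc ⌈(3 * ((j : ℚ) - 1)) / 2⌉ (3 * j - 3), binomZ (k - 2) (3 * (j - 1) - k - i)
        = (3 * j - 4 - i).toNat.fib := by
    rw [show 3 * j - 4 - i = 3 * j - 5 - i + 1 by ring, ← sum_binomZ_diagonal (3 * j - 5 - i) 2 _
      fun k hlo hhi => mem_gsum_range (j := j) (by omega) (by omega)]
    exact Finset.sum_congr rfl fun k _ => by ring_nf
  have diagonal_zero := diagonal 0 le_rfl zero_le_two
  simp only [sub_zero] at diagonal_zero
  obtain ⟨n, hn⟩ : ∃ n : ℕ, 3 * j - 6 = n := ⟨_, (Int.toNat_of_nonneg (by omega)).symm⟩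
  unfold gsum fkh
  rw [← Finset.mul_sum, Finset.sum_add_distrib, Finset.sum_add_distrib, diagonal_zero,
    diagonal 1 zero_le_one one_le_two, diagonal 2 zero_le_two le_rfl,
    show (3 * j - 4).toNat = n + 2 by omega, show (3 * j - 4 - 1).toNat = n + 1 by omega,
    show (3 * j - 4 - 2).toNat = n by omega, Nat.fib_add_two]
  push_cast
  ring

lemma fib_add_six (n : ℕ) : Nat.fib (n + 6) = 4 * Nat.fib (n + 3) + Nat.fib n := by
  simp only [Nat.fib_add_two]
  ring

theorem stmt15 (j : ℤ) (hj : 4 ≤ j) :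
    gsum j = 4 * gsum (j - 1) + gsum (j - 2) := by
  obtain ⟨n, hn⟩ : ∃ n : ℕ, 3 * (j - 2) - 4 = n := ⟨_, (Int.toNat_of_nonneg (by omega)).symm⟩
  rw [gsum_eq_four_mul_fib j (by omega), gsum_eq_four_mul_fib (j - 1) (by omega),
    gsum_eq_four_mul_fib (j - 2) (by omega),
    show (3 * j - 4).toNat = n + 6 by omega, show (3 * (j - 1) - 4).toNat = n + 3 by omega,
    show (3 * (j - 2) - 4).toNat = n by omega, fib_add_six]
  push_cast
  ring
end

section
/- Let s ≥ 2 and a = (a_1, …, a_s) ∈ ℤ_{≥1}^s with a_1 > a_j for all 2 ≤ j ≤ s and gcd(a_1, a_2) = 1, and let d ≥ s. Let λ = (λ_0, …, λ_d) be a nonzero fundamental parallelepiped point of the multidiagonal simplex P(a;d) ⊆ ℝ^d, and let k be the largest index with λ_k ≠ 0. Then the height of λ satisfies Σ_{c=0}^{d} λ_c ≥ ⌊k/s⌋·(1/a_1). -/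
open scoped BigOperators Pointwise

/-- Vertices of the multidiagonal simplex `P(a; d) ⊆ ℝ^d`:
`w_0 = 0` and `w_c = ∑_{i=1}^{min(s,c)} a_i e_{c+1-i}` for `1 ≤ c ≤ d`
(coordinates are 0-indexed, so `e_t` is the indicator of index `t-1`). -/
def Wvert (s : ℕ) (a : Fin s → ℕ) (d : ℕ) : Fin (d + 1) → Fin d → ℝ := fun c p =>
  if h : (p : ℕ) < (c : ℕ) ∧ (c : ℕ) - (p : ℕ) ≤ s then
    (a ⟨(c : ℕ) - (p : ℕ) - 1, by omega⟩ : ℝ)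
  else 0

lemma window_eq (s : ℕ) (a : Fin s → ℕ) (d : ℕ) (lam : Fin (d + 1) → ℝ)
    (L : ℕ → ℝ) (hL : ∀ (c : ℕ) (h : c < d + 1), L c = lam ⟨c, h⟩)
    (hL0 : ∀ c : ℕ, d + 1 ≤ c → L c = 0)
    (b : ℕ → ℝ) (hb : ∀ (i : ℕ) (h : i < s), (a ⟨i, h⟩ : ℝ) = b i)
    (t : ℕ) (ht1 : 1 ≤ t) (htd : t ≤ d) (j : Fin d) (hj : (j : ℕ) = t - 1) :
    ∑ i : Fin (d + 1), lam i * Wvert s a d i j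
      = ∑ i ∈ Finset.range s, b i * L (t + i) := by
  set g : ℕ → ℝ := fun c => L c * (if t ≤ c ∧ c < t + s then b (c - t) else 0) with hg
  have h1 : ∑ i : Fin (d + 1), lam i * Wvert s a d i j
      = ∑ c ∈ Finset.range (d + 1), g c := by
    rw [← Fin.sum_univ_eq_sum_range]
    refine Finset.sum_congr rfl fun i _ => ?_
    show lam i * Wvert s a d i j = L i.val * _
    rw [hL i.val i.isLt, Fin.eta]
    congr 1
    unfold Wvert
    by_cases hc : t ≤ (i : ℕ) ∧ (i : ℕ) < t + s
    · rw [if_pos hc, dif_pos (by omega)]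
      rw [← hb ((i : ℕ) - t) (by omega)]
      have hidx : (i : ℕ) - (j : ℕ) - 1 = (i : ℕ) - t := by omega
      simp only [hidx]
    · rw [if_neg hc, dif_neg (by omega)]
  have h2 : ∑ c ∈ Finset.range (d + 1), g c
      = ∑ c ∈ Finset.range (d + 1) ∩ Finset.Ico t (t + s), g c := by
    refine (Finset.sum_subset Finset.inter_subset_left fun x hx hx' => ?_).symm
    have : x ∉ Finset.Ico t (t + s) := fun hxi => hx' (Finset.mem_inter.mpr ⟨hx, hxi⟩)
    simp only [Finset.mem_Ico, not_and, not_lt] at this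
    simp only [hg]
    rw [if_neg, mul_zero]
    simp only [Finset.mem_range] at hx
    intro hc; exact absurd (this hc.1) (by omega)
  have h3 : ∑ c ∈ Finset.range (d + 1) ∩ Finset.Ico t (t + s), g c
      = ∑ c ∈ Finset.Ico t (t + s), g c := by
    refine Finset.sum_subset Finset.inter_subset_right fun x hx hx' => ?_
    have hxr : x ∉ Finset.range (d + 1) := fun hxr => hx' (Finset.mem_inter.mpr ⟨hxr, hx⟩)
    simp only [Finset.mem_range, not_lt] at hxr
    simp only [hg, hL0 x hxr, zero_mul]
  rw [h1, h2, h3, Finset.sum_Ico_eq_sum_range]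
  rw [Nat.add_sub_cancel_left]
  refine Finset.sum_congr rfl fun i hi => ?_
  simp only [Finset.mem_range] at hi
  simp only [hg]
  rw [if_pos ⟨Nat.le_add_right _ _, by omega⟩, Nat.add_sub_cancel_left, mul_comm]

theorem stmt16 (s : ℕ) (hs : 2 ≤ s) (a : Fin s → ℕ)
    (hpos : ∀ i, 1 ≤ a i) (hmax : ∀ i : Fin s, i ≠ ⟨0, by omega⟩ → a i < a ⟨0, by omega⟩)
    (hgcd : Nat.gcd (a ⟨0, by omega⟩) (a ⟨1, by omega⟩) = 1)
    (d : ℕ) (hd : s ≤ d) (lam : Fin (d + 1) → ℝ)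
    (hlam : IsFPP (Wvert s a d) lam) (hne : lam ≠ 0)
    (k : Fin (d + 1)) (hk : lam k ≠ 0) (hkmax : ∀ c : Fin (d + 1), lam c ≠ 0 → c ≤ k) :
    (((k : ℕ) / s : ℕ) : ℝ) * (1 / (a ⟨0, by omega⟩ : ℝ)) ≤ ∑ c, lam c := by
  classical
  obtain ⟨hrange, -, hint⟩ := hlam
  set A : ℕ := a ⟨0, by omega⟩ with hA
  set a2 : ℕ := a ⟨1, by omega⟩ with ha2
  have hA2 : 2 ≤ A := by
    have h1 := hpos ⟨1, by omega⟩
    have h2 := hmax ⟨1, by omega⟩ (by simp [Fin.ext_iff])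
    omega
  have hble : ∀ i : Fin s, a i ≤ A := by
    intro i
    by_cases hi : i = ⟨0, by omega⟩
    · rw [hi]
    · exact le_of_lt (hmax i hi)
  set L : ℕ → ℝ := fun c => if h : c < d + 1 then lam ⟨c, h⟩ else 0 with hLdef
  have hL : ∀ (c : ℕ) (h : c < d + 1), L c = lam ⟨c, h⟩ := fun c h => dif_pos h
  have hL0 : ∀ c : ℕ, d + 1 ≤ c → L c = 0 := fun c h => dif_neg (by omega)
  have hLnn : ∀ c, 0 ≤ L c := by
    intro c
    by_cases h : c < d + 1
    · rw [hL c h]; exact (hrange _).1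
    · rw [hL0 c (by omega)]
  have hLgt : ∀ c : ℕ, (k : ℕ) < c → L c = 0 := by
    intro c hc
    by_cases h : c < d + 1
    · rw [hL c h]
      by_contra hne0
      have := hkmax ⟨c, h⟩ hne0
      rw [Fin.le_def] at this
      simp only [Fin.val_mk] at this
      omega
    · exact hL0 c (by omega)
  set b : ℕ → ℝ := fun i => if h : i < s then (a ⟨i, h⟩ : ℝ) else 0 with hbdef
  have hb : ∀ (i : ℕ) (h : i < s), (a ⟨i, h⟩ : ℝ) = b i := by
    intro i h
    simp only [hbdef]
    rw [dif_pos h]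
  have hb0 : b 0 = (A : ℝ) := by rw [← hb 0 (by omega), hA]
  have hb1 : b 1 = (a2 : ℝ) := by rw [← hb 1 (by omega), ha2]
  have hbnn : ∀ i, 0 ≤ b i := by
    intro i; by_cases h : i < s
    · rw [← hb i h]; positivity
    · simp only [hbdef, dif_neg h]; exact le_refl 0
  have hbA : ∀ i, b i ≤ (A : ℝ) := by
    intro i; by_cases h : i < s
    · rw [← hb i h]; exact_mod_cast hble _
    · simp only [hbdef, dif_neg h]; positivity
  have xint : ∀ t : ℕ, 1 ≤ t → t ≤ d →
      ∃ z : ℤ, ∑ i ∈ Finset.range s, b i * L (t + i) = (z : ℝ) := by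
    intro t ht1 htd
    obtain ⟨z, hz⟩ := hint ⟨t - 1, by omega⟩
    exact ⟨z, by rw [← window_eq s a d lam L hL hL0 b hb t ht1 htd ⟨t - 1, by omega⟩ rfl]; exact hz⟩
  rcases Nat.eq_zero_or_pos ((k : ℕ) / s) with hM0 | hM1
  · rw [hM0]
    simp only [Nat.cast_zero, zero_mul]
    exact Finset.sum_nonneg fun c _ => (hrange c).1
  have hsk : s ≤ (k : ℕ) := by
    by_contra h
    rw [Nat.div_eq_of_lt (by omega)] at hM1; omega
  have hk1 : 1 ≤ (k : ℕ) := by omega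
  have hkd : (k : ℕ) ≤ d := by omega
  obtain ⟨zk, hzk⟩ := xint (k : ℕ) hk1 hkd
  have hsingle : ∑ i ∈ Finset.range s, b i * L ((k : ℕ) + i) = b 0 * L ((k : ℕ) + 0) :=
    Finset.sum_eq_single 0 (fun i _ hne' => by rw [hLgt ((k : ℕ) + i) (by omega), mul_zero])
      (fun h => absurd (Finset.mem_range.mpr (by omega)) h)
  have hzk' : (A : ℝ) * lam k = (zk : ℝ) := by
    rw [← hzk, hsingle, Nat.add_zero, hb0, hL (k : ℕ) k.isLt, Fin.eta]
  have hlamk_pos : 0 < lam k := lt_of_le_of_ne (hrange k).1 (Ne.symm hk)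
  have hzk_pos : 0 < zk := by
    have h : (0 : ℝ) < (zk : ℝ) := by rw [← hzk']; positivity
    exact_mod_cast h
  have hzk_lt : zk < (A : ℤ) := by
    have h : (zk : ℝ) < (A : ℝ) := by
      rw [← hzk']
      calc (A : ℝ) * lam k < (A : ℝ) * 1 :=
        mul_lt_mul_of_pos_left (hrange k).2 (by positivity)
      _ = (A : ℝ) := mul_one _
    exact_mod_cast h
  set n : ℕ := zk.toNat with hn
  have hzkn : zk = (n : ℤ) := (Int.toNat_of_nonneg hzk_pos.le).symm
  have hn0 : n ≠ 0 := by omega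
  have hnA : n < A := by omega
  have hA0 : A ≠ 0 := by omega
  have hnotdvd : ¬ A ∣ n := fun h => by have := Nat.le_of_dvd (by omega) h; omega
  obtain ⟨p, hple⟩ : ∃ p, ¬ A.factorization p ≤ n.factorization p := by
    by_contra h
    push_neg at h
    exact hnotdvd ((Nat.factorization_le_iff_dvd hA0 hn0).mp (Finsupp.le_def.mpr h))
  push_neg at hple
  have hp : p.Prime := by
    have hpos' : A.factorization p ≠ 0 := by omega
    have hmem : p ∈ A.factorization.support := Finsupp.mem_support_iff.mpr hpos'
    rw [Nat.support_factorization] at hmem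
    exact Nat.prime_of_mem_primeFactors hmem
  set e : ℕ := n.factorization p with he
  have hpe_n : (p : ℤ) ^ e ∣ (n : ℤ) := by
    rw [← Nat.cast_pow, Int.natCast_dvd_natCast]
    exact Nat.ordProj_dvd n p
  have hpe1_n : ¬ (p : ℤ) ^ (e + 1) ∣ (n : ℤ) := by
    rw [← Nat.cast_pow, Int.natCast_dvd_natCast]
    exact Nat.pow_succ_factorization_not_dvd hn0 hp
  have hpe1_A : (p : ℤ) ^ (e + 1) ∣ (A : ℤ) := by
    rw [← Nat.cast_pow, Int.natCast_dvd_natCast]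
    exact (Nat.Prime.pow_dvd_iff_le_factorization hp hA0).mpr (by omega)
  have hpA : (p : ℤ) ∣ (A : ℤ) := dvd_trans (dvd_pow_self _ (Nat.succ_ne_zero e)) hpe1_A
  have hpa2 : ¬ p ∣ a2 := by
    intro hdvd
    have hpA' : p ∣ A := by
      have : (p:ℕ) ^ (e+1) ∣ A := by
        have := hpe1_A
        rw [← Nat.cast_pow, Int.natCast_dvd_natCast] at this
        exact this
      exact dvd_trans (dvd_pow_self _ (Nat.succ_ne_zero e)) this
    have h1 : p ∣ Nat.gcd A a2 := Nat.dvd_gcd hpA' hdvd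
    rw [hgcd] at h1
    exact hp.one_lt.ne' (Nat.dvd_one.mp h1)
  have hcop : IsCoprime ((p : ℤ) ^ (e + 1)) ((a2 : ℤ)) :=
    (Nat.isCoprime_iff_coprime.mpr ((Nat.Prime.coprime_iff_not_dvd hp).mpr hpa2)).pow_left
  -- main downward induction
  have main : ∀ m : ℕ, m ≤ (k : ℕ) - 1 →
      ∃ y : ℤ, L ((k : ℕ) - m) * (A : ℝ) ^ (m + 1) = (y : ℝ) ∧
        (p : ℤ) ^ e ∣ y ∧ ¬ (p : ℤ) ^ (e + 1) ∣ y := by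
    intro m
    induction m using Nat.strong_induction_on with
    | _ m ih =>
      intro hm
      rcases Nat.eq_zero_or_pos m with hm0 | hm1
      · subst hm0
        refine ⟨zk, ?_, ?_, ?_⟩
        · rw [Nat.sub_zero, pow_one, hL (k : ℕ) k.isLt, Fin.eta, mul_comm]
          exact hzk'
        · rw [hzkn]; exact hpe_n
        · rw [hzkn]; exact hpe1_n
      · set t : ℕ := (k : ℕ) - m with ht
        have ht1 : 1 ≤ t := by omega
        have htk : t + 1 ≤ (k : ℕ) := by omega
        have htd : t ≤ d := by omega
        obtain ⟨zt, hzt⟩ := xint t ht1 htd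
        obtain ⟨y1, hy1, hy1e, hy1e1⟩ := ih (m - 1) (by omega) (by omega)
        have hky1 : (k : ℕ) - (m - 1) = t + 1 := by omega
        have hm1' : (m - 1) + 1 = m := by omega
        rw [hky1, hm1'] at hy1
        have hrest : ∀ i ∈ Finset.Ico 2 s, ∃ w : ℤ,
            b i * L (t + i) * (A : ℝ) ^ m = (w : ℝ) ∧ (p : ℤ) ^ (e + 1) ∣ w := by
          intro i hi
          simp only [Finset.mem_Ico] at hi
          by_cases hik : t + i ≤ (k : ℕ)
          · obtain ⟨y, hy, hye, -⟩ := ih (m - i) (by omega) (by omega)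
            have hki : (k : ℕ) - (m - i) = t + i := by omega
            rw [hki] at hy
            have hexp : (m - i) + 1 + (i - 1) = m := by omega
            refine ⟨(a ⟨i, hi.2⟩ : ℤ) * y * (A : ℤ) ^ (i - 1), ?_, ?_⟩
            · rw [← hexp, pow_add]
              push_cast
              rw [← hy, hb i hi.2]
              ring
            · have h2 : (p : ℤ) ∣ (A : ℤ) ^ (i - 1) :=
                dvd_trans hpA (dvd_pow_self _ (by omega))
              calc (p : ℤ) ^ (e + 1) = (p : ℤ) ^ e * p := by ring
                _ ∣ y * (A : ℤ) ^ (i - 1) := mul_dvd_mul hye h2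
                _ ∣ (a ⟨i, hi.2⟩ : ℤ) * y * (A : ℤ) ^ (i - 1) := by
                    have hre : (a ⟨i, hi.2⟩ : ℤ) * y * (A : ℤ) ^ (i - 1)
                        = y * (A : ℤ) ^ (i - 1) * (a ⟨i, hi.2⟩ : ℤ) := by ring
                    rw [hre]; exact dvd_mul_right _ _
          · refine ⟨0, ?_, dvd_zero _⟩
            rw [hLgt (t + i) (by omega)]
            simp
        have hsum2 : ∃ w2 : ℤ,
            (∑ i ∈ Finset.Ico 2 s, b i * L (t + i)) * (A : ℝ) ^ m = (w2 : ℝ)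
            ∧ (p : ℤ) ^ (e + 1) ∣ w2 := by
          rw [Finset.sum_mul]
          refine Finset.sum_induction _
            (fun x => ∃ w : ℤ, x = (w : ℝ) ∧ (p : ℤ) ^ (e + 1) ∣ w) ?_ ?_ hrest
          · rintro x y ⟨w, hw, hwd⟩ ⟨w', hw', hwd'⟩
            exact ⟨w + w', by rw [hw, hw']; push_cast; ring, dvd_add hwd hwd'⟩
          · exact ⟨0, by simp, dvd_zero _⟩
        obtain ⟨w2, hw2, hw2dvd⟩ := hsum2
        have hsplit : ∑ i ∈ Finset.range s, b i * L (t + i)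
            = b 0 * L (t + 0) + b 1 * L (t + 1) + ∑ i ∈ Finset.Ico 2 s, b i * L (t + i) := by
          rw [Finset.range_eq_Ico, Finset.sum_eq_sum_Ico_succ_bot (by omega : 0 < s),
            Finset.sum_eq_sum_Ico_succ_bot (by omega : 0 + 1 < s)]
          norm_num [add_assoc]
        refine ⟨zt * (A : ℤ) ^ m - (a2 : ℤ) * y1 - w2, ?_, ?_, ?_⟩
        · have key : (A : ℝ) ^ m * (∑ i ∈ Finset.range s, b i * L (t + i))
              = L t * (A : ℝ) ^ (m + 1) + (a2 : ℝ) * (y1 : ℝ) + (w2 : ℝ) := by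
            rw [hsplit, hb0, hb1, ← hy1, ← hw2]
            rw [Nat.add_zero]
            ring
          rw [hzt] at key
          push_cast
          linarith [key]
        · have h1 : (p : ℤ) ^ e ∣ (A : ℤ) ^ m := by
            have h1a : (p : ℤ) ^ e ∣ (A : ℤ) := dvd_trans (pow_dvd_pow (p:ℤ) (Nat.le_succ e)) hpe1_A
            exact dvd_trans h1a (dvd_pow_self _ (by omega))
          exact dvd_sub (dvd_sub (Dvd.dvd.mul_left h1 zt) (Dvd.dvd.mul_left hy1e _))
            (dvd_trans (pow_dvd_pow (p:ℤ) (Nat.le_succ e)) hw2dvd)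
        · intro hcon
          have hz1 : (p : ℤ) ^ (e + 1) ∣ zt * (A : ℤ) ^ m :=
            Dvd.dvd.mul_left (dvd_trans hpe1_A (dvd_pow_self _ (by omega))) zt
          have hsub : (p : ℤ) ^ (e + 1) ∣ (a2 : ℤ) * y1 := by
            have hre : (a2 : ℤ) * y1
                = zt * (A : ℤ) ^ m - w2 - (zt * (A : ℤ) ^ m - (a2 : ℤ) * y1 - w2) := by ring
            rw [hre]
            exact dvd_sub (dvd_sub hz1 hw2dvd) hcon
          exact hy1e1 (hcop.dvd_of_dvd_mul_left hsub)
  have Lpos : ∀ t : ℕ, 1 ≤ t → t ≤ (k : ℕ) → 0 < L t := by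
    intro t ht1 htk
    obtain ⟨y, hy, -, hyne⟩ := main ((k : ℕ) - t) (by omega)
    have hkt : (k : ℕ) - ((k : ℕ) - t) = t := by omega
    rw [hkt] at hy
    rcases lt_or_eq_of_le (hLnn t) with h | h
    · exact h
    · exfalso
      rw [← h, zero_mul] at hy
      have hy0 : y = 0 := by exact_mod_cast hy.symm
      rw [hy0] at hyne
      exact hyne (dvd_zero _)
  have Wlow : ∀ t : ℕ, 1 ≤ t → t ≤ (k : ℕ) →
      1 / (A : ℝ) ≤ ∑ i ∈ Finset.range s, L (t + i) := by
    intro t ht1 htk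
    obtain ⟨z, hz⟩ := xint t ht1 (by omega)
    have hzpos : (0 : ℝ) < (z : ℝ) := by
      rw [← hz]
      have h0 : b 0 * L (t + 0) ≤ ∑ i ∈ Finset.range s, b i * L (t + i) :=
        Finset.single_le_sum (fun i _ => mul_nonneg (hbnn i) (hLnn _))
          (Finset.mem_range.mpr (by omega))
      have hpos0 : 0 < b 0 * L (t + 0) := by
        rw [Nat.add_zero, hb0]
        exact mul_pos (by positivity) (Lpos t ht1 htk)
      linarith
    have hz1 : (1 : ℝ) ≤ (z : ℝ) := by
      have : (0 : ℤ) < z := by exact_mod_cast hzpos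
      exact_mod_cast this
    have hupper : (z : ℝ) ≤ (A : ℝ) * ∑ i ∈ Finset.range s, L (t + i) := by
      rw [← hz, Finset.mul_sum]
      exact Finset.sum_le_sum fun i _ => mul_le_mul_of_nonneg_right (hbA i) (hLnn _)
    rw [div_le_iff₀ (by positivity : (0:ℝ) < (A:ℝ)), mul_comm]
    linarith
  have Blk : ∀ m : ℕ, m * s ≤ (k : ℕ) →
      (m : ℝ) * (1 / (A : ℝ)) ≤ ∑ j ∈ Finset.range (m * s), L ((k : ℕ) + 1 - m * s + j) := by
    intro m
    induction m with
    | zero => intro _; simp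
    | succ m ihm =>
      intro hms
      have hrw : (m + 1) * s = s + m * s := by ring
      have hms2 : s + m * s ≤ (k : ℕ) := by rw [← hrw]; exact hms
      have hms' : m * s ≤ (k : ℕ) := by omega
      rw [hrw, Finset.sum_range_add]
      have h1 : 1 / (A : ℝ) ≤ ∑ j ∈ Finset.range s, L ((k : ℕ) + 1 - (s + m * s) + j) :=
        Wlow ((k : ℕ) + 1 - (s + m * s)) (by omega) (by omega)
      have h2 : ∑ j ∈ Finset.range (m * s), L ((k : ℕ) + 1 - (s + m * s) + (s + j))
          = ∑ j ∈ Finset.range (m * s), L ((k : ℕ) + 1 - m * s + j) := by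
        refine Finset.sum_congr rfl fun j hj => ?_
        congr 1
        omega
      rw [h2]
      have h3 := ihm hms'
      push_cast
      linarith
  set M : ℕ := (k : ℕ) / s with hM
  have hMs : M * s ≤ (k : ℕ) := Nat.div_mul_le_self _ _
  have hblk := Blk M hMs
  have hto : ∑ j ∈ Finset.range (M * s), L ((k : ℕ) + 1 - M * s + j) ≤ ∑ c, lam c := by
    have htot : ∑ c, lam c = ∑ u ∈ Finset.range (d + 1), L u := by
      rw [← Fin.sum_univ_eq_sum_range]
      exact Finset.sum_congr rfl fun i _ => by rw [hL i.val i.isLt, Fin.eta]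
    have hIco : ∑ j ∈ Finset.range (M * s), L ((k : ℕ) + 1 - M * s + j)
        = ∑ u ∈ Finset.Ico ((k : ℕ) + 1 - M * s) ((k : ℕ) + 1), L u := by
      rw [Finset.sum_Ico_eq_sum_range]
      have hms : (k : ℕ) + 1 - ((k : ℕ) + 1 - M * s) = M * s := by omega
      rw [hms]
    rw [htot, hIco]
    apply Finset.sum_le_sum_of_subset_of_nonneg
    · intro u hu
      simp only [Finset.mem_Ico] at hu
      exact Finset.mem_range.mpr (by omega)
    · intro u _ _; exact hLnn u
  calc (M : ℝ) * (1 / (A : ℝ)) ≤ _ := hblk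
    _ ≤ ∑ c, lam c := hto
end
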